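/- arXiv:2304.09154 — 2 statements merged into one kernel-verified Lean document; each statement's English description precedes it below -/
import Mathlib

section
/- Let X_1,…,X_n be i.i.d. from a distribution P on ℝ^d, and let μ* ∈ ℝ^d with ||μ*|| ≤ n^{−1/4}. Then for any Borel measurable test ψ : (ℝ^d)^n → {0,1} of the null hypothesis H_0 : P = N_d(0, I_d) against the alternative H_1 : P = (1/2)N_d(μ*, I_d) + (1/2)N_d(−μ*, I_d), the sum of error probabilities satisfies P_{H_0}(ψ(X_1,…,X_n) = 1) + P_{H_1}(ψ(X_1,…,X_n) = 0) > 1/2. -/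
open MeasureTheory

/-- The `d`-dimensional Gaussian distribution `N_d(m, I_d)`, defined via its Lebesgue density. -/
noncomputable def gaussianId (d : ℕ) (m : EuclideanSpace ℝ (Fin d)) :
    Measure (EuclideanSpace ℝ (Fin d)) :=
  volume.withDensity fun x =>
    ENNReal.ofReal ((2 * Real.pi) ^ (-(d : ℝ) / 2) * Real.exp (-‖x - m‖ ^ 2 / 2))

/-- The two-component Gaussian mixture `(1/2) N_d(μ*, I_d) + (1/2) N_d(−μ*, I_d)`. -/
noncomputable def gaussianMixture (d : ℕ) (m : EuclideanSpace ℝ (Fin d)) :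
    Measure (EuclideanSpace ℝ (Fin d)) :=
  ((1 : ENNReal) / 2) • gaussianId d m + ((1 : ENNReal) / 2) • gaussianId d (-m)

/-!
Le Cam's two-point argument. If `L` is the likelihood ratio of the alternative with respect to the
null, the two error probabilities of any test add up to at least `∫ min 1 L`, and
`∫ min 1 L = 1 - (∫ |L - 1|) / 2 ≥ 1 - √χ² / 2` by Cauchy–Schwarz, with `χ² = Var[L]`.
For one observation `L(x) = e^{-‖μ‖²/2} cosh ⟪x, μ⟫`, whose second moment under `N(0, I)` is
`cosh ‖μ‖²`; for `n` observations `χ² = (cosh ‖μ‖²)ⁿ - 1 ≤ e^{n ‖μ‖⁴ / 2} - 1 ≤ e^{1/2} - 1 < 1`.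
-/

open Real ProbabilityTheory
open scoped ENNReal RealInnerProductSpace

section Testing

variable {α : Type*} [MeasurableSpace α] {P : Measure α}

theorem lintegral_min_one_le_add_withDensity_compl (f : α → ℝ≥0∞) {A : Set α}
    (hA : MeasurableSet A) : ∫⁻ x, min 1 (f x) ∂P ≤ P A + P.withDensity f Aᶜ := by
  rw [withDensity_apply _ hA.compl, ← lintegral_indicator_one hA,
    ← lintegral_indicator hA.compl, ← lintegral_add_left (measurable_one.indicator hA)]
  refine lintegral_mono fun x => ?_
  by_cases hx : x ∈ A <;> simp [hx]

theorem integral_abs_sub_integral_le_sqrt_variance [IsProbabilityMeasure P] {f : α → ℝ}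
    (hf : MemLp f 2 P) : ∫ x, |f x - P[f]| ∂P ≤ √(Var[f; P]) := by
  have hdev : MemLp (fun x => |f x - P[f]|) 2 P := (hf.sub (memLp_const _)).abs
  have hsq : P[(fun x => |f x - P[f]|) ^ 2] = Var[f; P] := by
    simp only [variance_eq_integral hf.aestronglyMeasurable.aemeasurable, Pi.pow_apply, sq_abs]
  refine Real.le_sqrt_of_sq_le ?_
  have := variance_nonneg (fun x => |f x - P[f]|) P
  rw [variance_eq_sub hdev, hsq] at this
  linarith

theorem ofReal_one_sub_half_sqrt_variance_le_add_withDensity_compl [IsProbabilityMeasure P]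
    {f : α → ℝ} (hf_nonneg : 0 ≤ f) (hf : MemLp f 2 P)
    (hf_one : ∫ x, f x ∂P = 1) {A : Set α} (hA : MeasurableSet A) :
    ENNReal.ofReal (1 - √(Var[f; P]) / 2) ≤
      P A + P.withDensity (fun x => ENNReal.ofReal (f x)) Aᶜ := by
  have hf_int : Integrable f P := hf.integrable one_le_two
  have hmin : ∀ x, min 1 (f x) = (1 + f x - |f x - 1|) / 2 := fun x => by
    rw [← min_add_max 1 (f x), ← max_sub_min_eq_abs' (f x) 1, min_comm, max_comm]
    ring
  have hmin_int : Integrable (fun x => min 1 (f x)) P := (integrable_const 1).inf hf_int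
  calc ENNReal.ofReal (1 - √(Var[f; P]) / 2)
      ≤ ENNReal.ofReal (∫ x, min 1 (f x) ∂P) := by
        refine ENNReal.ofReal_le_ofReal ?_
        have hdev := integral_abs_sub_integral_le_sqrt_variance hf
        rw [hf_one] at hdev
        simp only [hmin]
        have hsum : Integrable (fun x => 1 + f x) P := (integrable_const 1).add hf_int
        have habs : Integrable (fun x => |f x - 1|) P := (hf_int.sub (integrable_const 1)).abs
        rw [integral_div, integral_sub hsum habs, integral_add (integrable_const 1) hf_int,
          hf_one, integral_const, probReal_univ, one_smul]
        linarith
    _ = ∫⁻ x, min 1 (ENNReal.ofReal (f x)) ∂P := by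
        rw [ofReal_integral_eq_lintegral_ofReal hmin_int
          (.of_forall fun x => le_min zero_le_one (hf_nonneg x))]
        congr with x
        rw [ENNReal.ofReal_min, ENNReal.ofReal_one]
    _ ≤ _ := lintegral_min_one_le_add_withDensity_compl _ hA

end Testing

section Pi

variable {ι : Type*} [Fintype ι] {α : ι → Type*} [∀ i, MeasurableSpace (α i)]
  {μ : ∀ i, Measure (α i)} [∀ i, IsProbabilityMeasure (μ i)]

theorem lintegral_pi_prod_eq_prod {f : ∀ i, α i → ℝ≥0∞} (hf : ∀ i, Measurable (f i)) :
    ∫⁻ x, ∏ i, f i (x i) ∂Measure.pi μ = ∏ i, ∫⁻ y, f i y ∂μ i := by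
  refine (lintegral_prod_eq_prod_lintegral_of_indepFun Finset.univ
    (fun i (x : ∀ j, α j) => f i (x i)) (iIndepFun_pi fun i => (hf i).aemeasurable)
    fun i => (hf i).comp (measurable_pi_apply i)).trans ?_
  exact Finset.prod_congr rfl fun i _ => (measurePreserving_eval μ i).lintegral_comp (hf i)

theorem pi_withDensity {f : ∀ i, α i → ℝ≥0∞} (hf : ∀ i, Measurable (f i))
    [∀ i, SigmaFinite ((μ i).withDensity (f i))] :
    Measure.pi (fun i => (μ i).withDensity (f i)) =
      (Measure.pi μ).withDensity fun x => ∏ i, f i (x i) := by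
  refine Measure.pi_eq fun s hs => ?_
  have hind : (Set.univ.pi s).indicator (fun x => ∏ i, f i (x i)) =
      fun x => ∏ i, (s i).indicator (f i) (x i) := by
    ext x
    by_cases hx : x ∈ Set.univ.pi s
    · rw [Set.indicator_of_mem hx]
      exact Finset.prod_congr rfl fun i _ => (Set.indicator_of_mem (hx i trivial) _).symm
    · obtain ⟨i, hi⟩ : ∃ i, x i ∉ s i := by simpa using hx
      rw [Set.indicator_of_notMem hx]
      exact (Finset.prod_eq_zero (Finset.mem_univ i) (Set.indicator_of_notMem hi _)).symm
  rw [withDensity_apply _ (MeasurableSet.univ_pi hs), ← lintegral_indicator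
    (MeasurableSet.univ_pi hs), hind, lintegral_pi_prod_eq_prod fun i => (hf i).indicator (hs i)]
  exact Finset.prod_congr rfl fun i _ => by
    rw [lintegral_indicator (hs i), withDensity_apply _ (hs i)]

variable {g : ∀ i, α i → ℝ}

theorem memLp_two_pi_prod (hg : ∀ i, MemLp (g i) 2 (μ i)) :
    MemLp (fun x => ∏ i, g i (x i)) 2 (Measure.pi μ) := by
  have hmeas : AEStronglyMeasurable (fun x => ∏ i, g i (x i)) (Measure.pi μ) :=
    Finset.aestronglyMeasurable_fun_prod _ fun i _ =>
      (hg i).aestronglyMeasurable.comp_quasiMeasurePreserving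
        (Measure.quasiMeasurePreserving_eval μ i)
  refine (memLp_two_iff_integrable_sq hmeas).mpr ?_
  simp_rw [← Finset.prod_pow]
  exact Integrable.fintype_prod_dep fun i => (hg i).integrable_sq

theorem variance_pi_prod (hg : ∀ i, MemLp (g i) 2 (μ i)) :
    Var[fun x => ∏ i, g i (x i); Measure.pi μ] =
      ∏ i, ∫ y, g i y ^ 2 ∂μ i - (∏ i, ∫ y, g i y ∂μ i) ^ 2 := by
  rw [variance_eq_sub (memLp_two_pi_prod hg), ← integral_fintype_prod_eq_prod,
    ← integral_fintype_prod_eq_prod]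
  simp only [Pi.pow_apply, Finset.prod_pow]

end Pi

section Gaussian

variable {d : ℕ}

theorem lintegral_gaussianId_density (m : EuclideanSpace ℝ (Fin d)) :
    ∫⁻ x, ENNReal.ofReal ((2 * π) ^ (-(d : ℝ) / 2) * exp (-‖x - m‖ ^ 2 / 2)) = 1 := by
  rw [lintegral_sub_right_eq_self
    (fun x => ENNReal.ofReal ((2 * π) ^ (-(d : ℝ) / 2) * exp (-‖x‖ ^ 2 / 2))) m]
  have hint :
      ∫ x : EuclideanSpace ℝ (Fin d), exp (-‖x‖ ^ 2 / 2) = (2 * π) ^ ((d : ℝ) / 2) := by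
    have h := GaussianFourier.integral_rexp_neg_mul_sq_norm (V := EuclideanSpace ℝ (Fin d))
      (b := 1 / 2) (by norm_num)
    rw [finrank_euclideanSpace_fin, div_div_eq_mul_div, div_one, mul_comm π] at h
    convert h using 4 with x
    ring
  have hne : ∫ x : EuclideanSpace ℝ (Fin d), exp (-‖x‖ ^ 2 / 2) ≠ 0 := by
    rw [hint]; positivity
  rw [← ofReal_integral_eq_lintegral_ofReal ((Integrable.of_integral_ne_zero hne).const_mul _)
    (.of_forall fun x => by positivity), integral_const_mul, hint,
    ← rpow_add (by positivity), neg_div, neg_add_cancel, rpow_zero, ENNReal.ofReal_one]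

instance isProbabilityMeasure_gaussianId (m : EuclideanSpace ℝ (Fin d)) :
    IsProbabilityMeasure (gaussianId d m) :=
  ⟨by rw [gaussianId, withDensity_apply _ .univ, setLIntegral_univ,
    lintegral_gaussianId_density]⟩

noncomputable def gaussianTilt (m x : EuclideanSpace ℝ (Fin d)) : ℝ :=
  exp (⟪x, m⟫ - ‖m‖ ^ 2 / 2)

theorem gaussianTilt_pos (m x : EuclideanSpace ℝ (Fin d)) : 0 < gaussianTilt m x := exp_pos _

theorem measurable_gaussianTilt (m : EuclideanSpace ℝ (Fin d)) :
    Measurable (gaussianTilt m) := by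
  unfold gaussianTilt
  fun_prop

theorem gaussianTilt_mul (m m' x : EuclideanSpace ℝ (Fin d)) :
    gaussianTilt m x * gaussianTilt m' x = exp ⟪m, m'⟫ * gaussianTilt (m + m') x := by
  simp only [gaussianTilt, ← exp_add, inner_add_right, norm_add_sq_real]
  ring_nf

theorem gaussianId_eq_withDensity_gaussianTilt (m : EuclideanSpace ℝ (Fin d)) :
    gaussianId d m =
      (gaussianId d 0).withDensity fun x => ENNReal.ofReal (gaussianTilt m x) := by
  rw [gaussianId, gaussianId, ← withDensity_mul _ (by fun_prop)
    (measurable_gaussianTilt m).ennreal_ofReal]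
  congr with x
  rw [Pi.mul_apply, ← ENNReal.ofReal_mul (by positivity), mul_assoc, gaussianTilt, ← exp_add,
    sub_zero, norm_sub_sq_real]
  ring_nf

theorem lintegral_gaussianTilt (m : EuclideanSpace ℝ (Fin d)) :
    ∫⁻ x, ENNReal.ofReal (gaussianTilt m x) ∂gaussianId d 0 = 1 := by
  rw [← setLIntegral_univ, ← withDensity_apply _ .univ,
    ← gaussianId_eq_withDensity_gaussianTilt, measure_univ]

theorem integrable_gaussianTilt (m : EuclideanSpace ℝ (Fin d)) :
    Integrable (gaussianTilt m) (gaussianId d 0) :=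
  ⟨(measurable_gaussianTilt m).aestronglyMeasurable,
    (hasFiniteIntegral_iff_ofReal (.of_forall fun x => (gaussianTilt_pos m x).le)).2
      ((lintegral_gaussianTilt m).trans_lt ENNReal.one_lt_top)⟩

theorem integral_gaussianTilt (m : EuclideanSpace ℝ (Fin d)) :
    ∫ x, gaussianTilt m x ∂gaussianId d 0 = 1 := by
  rw [integral_eq_lintegral_of_nonneg_ae (f := gaussianTilt m)
    (.of_forall fun x => (gaussianTilt_pos m x).le)
    (measurable_gaussianTilt m).aestronglyMeasurable, lintegral_gaussianTilt, ENNReal.toReal_one]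

theorem integrable_gaussianTilt_mul (m m' : EuclideanSpace ℝ (Fin d)) :
    Integrable (fun x => gaussianTilt m x * gaussianTilt m' x) (gaussianId d 0) := by
  simpa only [gaussianTilt_mul] using (integrable_gaussianTilt (m + m')).const_mul (exp ⟪m, m'⟫)

theorem integral_gaussianTilt_mul (m m' : EuclideanSpace ℝ (Fin d)) :
    ∫ x, gaussianTilt m x * gaussianTilt m' x ∂gaussianId d 0 = exp ⟪m, m'⟫ := by
  simp only [gaussianTilt_mul, integral_const_mul, integral_gaussianTilt, mul_one]

noncomputable def gaussianMixtureRatio (m x : EuclideanSpace ℝ (Fin d)) : ℝ :=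
  (gaussianTilt m x + gaussianTilt (-m) x) / 2

theorem measurable_gaussianMixtureRatio (m : EuclideanSpace ℝ (Fin d)) :
    Measurable (gaussianMixtureRatio m) :=
  ((measurable_gaussianTilt m).add (measurable_gaussianTilt (-m))).div_const 2

theorem gaussianMixtureRatio_nonneg (m : EuclideanSpace ℝ (Fin d)) :
    0 ≤ gaussianMixtureRatio m :=
  fun x => div_nonneg (add_pos (gaussianTilt_pos m x) (gaussianTilt_pos (-m) x)).le zero_le_two

theorem gaussianMixture_eq_withDensity (m : EuclideanSpace ℝ (Fin d)) :
    gaussianMixture d m =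
      (gaussianId d 0).withDensity fun x => ENNReal.ofReal (gaussianMixtureRatio m x) := by
  rw [gaussianMixture, gaussianId_eq_withDensity_gaussianTilt m,
    gaussianId_eq_withDensity_gaussianTilt (-m),
    ← withDensity_smul _ (measurable_gaussianTilt _).ennreal_ofReal,
    ← withDensity_smul _ (measurable_gaussianTilt _).ennreal_ofReal,
    ← withDensity_add_left ((measurable_gaussianTilt _).ennreal_ofReal.const_smul _)]
  congr with x
  simp only [Pi.add_apply, Pi.smul_apply, smul_eq_mul, gaussianMixtureRatio, add_div]
  rw [ENNReal.ofReal_add (div_pos (gaussianTilt_pos m x) two_pos).le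
    (div_pos (gaussianTilt_pos (-m) x) two_pos).le, ENNReal.ofReal_div_of_pos two_pos,
    ENNReal.ofReal_div_of_pos two_pos]
  simp [ENNReal.div_eq_inv_mul]

theorem gaussianMixtureRatio_sq (m x : EuclideanSpace ℝ (Fin d)) :
    gaussianMixtureRatio m x ^ 2 =
      (gaussianTilt m x * gaussianTilt m x + 2 * (gaussianTilt m x * gaussianTilt (-m) x)
        + gaussianTilt (-m) x * gaussianTilt (-m) x) / 4 := by
  unfold gaussianMixtureRatio
  ring

theorem memLp_gaussianMixtureRatio (m : EuclideanSpace ℝ (Fin d)) :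
    MemLp (gaussianMixtureRatio m) 2 (gaussianId d 0) := by
  refine (memLp_two_iff_integrable_sq ?_).2 ?_
  · exact (measurable_gaussianMixtureRatio m).aestronglyMeasurable
  · simp only [gaussianMixtureRatio_sq]
    exact (((integrable_gaussianTilt_mul m m).fun_add
      ((integrable_gaussianTilt_mul m (-m)).const_mul 2)).fun_add
        (integrable_gaussianTilt_mul (-m) (-m))).div_const 4

theorem integral_gaussianMixtureRatio (m : EuclideanSpace ℝ (Fin d)) :
    ∫ x, gaussianMixtureRatio m x ∂gaussianId d 0 = 1 := by
  unfold gaussianMixtureRatio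
  rw [integral_div, integral_add (integrable_gaussianTilt m)
    (integrable_gaussianTilt (-m)), integral_gaussianTilt, integral_gaussianTilt]
  norm_num

theorem integral_gaussianMixtureRatio_sq (m : EuclideanSpace ℝ (Fin d)) :
    ∫ x, gaussianMixtureRatio m x ^ 2 ∂gaussianId d 0 = cosh (‖m‖ ^ 2) := by
  have h₁ := integrable_gaussianTilt_mul m m
  have h₂ := (integrable_gaussianTilt_mul m (-m)).const_mul 2
  have h₃ := integrable_gaussianTilt_mul (-m) (-m)
  simp only [gaussianMixtureRatio_sq]
  rw [integral_div, integral_add (h₁.fun_add h₂) h₃, integral_add h₁ h₂, integral_const_mul,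
    integral_gaussianTilt_mul, integral_gaussianTilt_mul,
    integral_gaussianTilt_mul, inner_neg_right, inner_neg_neg, real_inner_self_eq_norm_sq, cosh_eq]
  ring

theorem pi_gaussianMixture_eq_withDensity {ι : Type*} [Fintype ι]
    (m : EuclideanSpace ℝ (Fin d)) :
    Measure.pi (fun _ : ι => gaussianMixture d m) =
      (Measure.pi fun _ => gaussianId d 0).withDensity
        fun x => ENNReal.ofReal (∏ i, gaussianMixtureRatio m (x i)) := by
  have : SigmaFinite
      ((gaussianId d 0).withDensity fun x => ENNReal.ofReal (gaussianMixtureRatio m x)) :=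
    SigmaFinite.withDensity_of_ne_top' fun _ => ENNReal.ofReal_ne_top
  simp_rw [gaussianMixture_eq_withDensity,
    pi_withDensity fun _ => (measurable_gaussianMixtureRatio m).ennreal_ofReal,
    ENNReal.ofReal_prod_of_nonneg fun i _ => gaussianMixtureRatio_nonneg m _]

theorem variance_pi_prod_gaussianMixtureRatio {ι : Type*} [Fintype ι]
    (m : EuclideanSpace ℝ (Fin d)) :
    Var[fun x => ∏ i, gaussianMixtureRatio m (x i); Measure.pi fun _ : ι => gaussianId d 0] =
      cosh (‖m‖ ^ 2) ^ Fintype.card ι - 1 := by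
  simp [variance_pi_prod fun _ => memLp_gaussianMixtureRatio m, integral_gaussianMixtureRatio,
    integral_gaussianMixtureRatio_sq]

end Gaussian

theorem cosh_sq_pow_le_exp_half {n : ℕ} {r : ℝ} (hr0 : 0 ≤ r)
    (hr : r ≤ (n : ℝ) ^ (-(1 / 4 : ℝ))) : cosh (r ^ 2) ^ n ≤ exp (1 / 2) := by
  have hn : (n : ℝ) * r ^ 4 ≤ 1 := by
    rcases n.eq_zero_or_pos with rfl | hn
    · simp
    calc (n : ℝ) * r ^ 4 ≤ n * ((n : ℝ) ^ (-(1 / 4 : ℝ))) ^ 4 := by gcongr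
      _ = 1 := by
        rw [← rpow_natCast, ← rpow_mul n.cast_nonneg]
        norm_num
        rw [rpow_neg_one, mul_inv_cancel₀ (Nat.cast_pos.2 hn).ne']
  calc cosh (r ^ 2) ^ n ≤ exp ((r ^ 2) ^ 2 / 2) ^ n :=
        pow_le_pow_left₀ (cosh_pos _).le (cosh_le_exp_half_sq _) n
    _ = exp (n * r ^ 4 / 2) := by rw [← exp_nat_mul]; ring_nf
    _ ≤ exp (1 / 2) := exp_le_exp.2 (by linarith)

/-- **Lemma (testing lower bound).** If `‖μ*‖ ≤ n^{−1/4}`, then any Borel test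
`ψ : (ℝ^d)^n → {0,1}` of `H₀ : P = N_d(0, I_d)` against
`H₁ : P = (1/2)N_d(μ*, I_d) + (1/2)N_d(−μ*, I_d)`, based on `n` i.i.d. observations,
has sum of error probabilities exceeding `1/2`. -/
theorem testing_lower_bound_gaussian_mixture
    (d n : ℕ) (μstar : EuclideanSpace ℝ (Fin d))
    (hμ : ‖μstar‖ ≤ (n : ℝ) ^ (-(1 / 4 : ℝ)))
    (ψ : (Fin n → EuclideanSpace ℝ (Fin d)) → Bool)
    (hψ : Measurable ψ) :
    (1 : ENNReal) / 2 <
      (Measure.pi fun _ : Fin n => gaussianId d 0) {x | ψ x = true} +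
      (Measure.pi fun _ : Fin n => gaussianMixture d μstar) {x | ψ x = false} := by
  have hA : MeasurableSet {x | ψ x = true} := hψ (measurableSet_singleton true)
  have hcompl : {x | ψ x = false} = {x | ψ x = true}ᶜ := by ext x; simp
  have hexp : exp (1 / 2) < 2 := by
    have := exp_bound_div_one_sub_of_interval' (x := 1 / 2) (by norm_num) (by norm_num)
    norm_num at this ⊢
    exact this
  have hχ : √(cosh (‖μstar‖ ^ 2) ^ n - 1) < 1 := by
    rw [sqrt_lt' one_pos]
    linarith [cosh_sq_pow_le_exp_half (norm_nonneg μstar) hμ]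
  rw [hcompl, pi_gaussianMixture_eq_withDensity]
  refine lt_of_lt_of_le ?_ (ofReal_one_sub_half_sqrt_variance_le_add_withDensity_compl
    (fun x => Finset.prod_nonneg fun i _ => gaussianMixtureRatio_nonneg μstar (x i))
    (memLp_two_pi_prod fun _ => memLp_gaussianMixtureRatio μstar)
    (by rw [integral_fintype_prod_eq_pow, integral_gaussianMixtureRatio, one_pow]) hA)
  rw [variance_pi_prod_gaussianMixtureRatio, Fintype.card_fin,
    show (1 : ℝ≥0∞) / 2 = ENNReal.ofReal (1 / 2) by
      rw [ENNReal.ofReal_div_of_pos two_pos, ENNReal.ofReal_one, ENNReal.ofReal_ofNat]]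
  exact (ENNReal.ofReal_lt_ofReal_iff (by linarith)).2 (by linarith)
end

section
/- For any a, b ∈ ℝ, (1/2){tanh(a+b) − tanh(a−b)} ≤ |b|, and (a/2){tanh(a+b) + tanh(a−b)} ≥ a² − a⁴/3 − a²b². -/
/-!
The first inequality is the `1`-Lipschitz property of `tanh`, whose derivative is
`1 - tanh² ∈ (0, 1]`. For the second, the addition formula gives, with `t = tanh a` and
`s = tanh b`, `tanh (a + b) + tanh (a - b) = 2 t (1 - s²) / (1 - t² s²)`. Since `a t ≥ 0` and the
denominator lies in `(0, 1]`, it can be dropped; what remains follows from `s² ≤ b²`,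
`a t ≤ a²` and `a t ≥ a² - a⁴ / 3`. The last bound holds because `tanh x - x + x³ / 3` is monotone,
its derivative being `x² - tanh² x ≥ 0`.
-/

theorem Monotone.mul_apply_nonneg {α : Type*} [Ring α] [LinearOrder α] [IsStrictOrderedRing α]
    {f : α → α} (hf : Monotone f) (hf0 : f 0 = 0) (x : α) : 0 ≤ x * f x := by
  rcases le_total 0 x with hx | hx
  · exact mul_nonneg hx (hf0 ▸ hf hx)
  · exact mul_nonneg_of_nonpos_of_nonpos hx (hf0 ▸ hf hx)

namespace Real

theorem hasDerivAt_tanh (x : ℝ) : HasDerivAt tanh (1 - tanh x ^ 2) x := by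
  have h := (hasDerivAt_sinh x).div (hasDerivAt_cosh x) (cosh_pos x).ne'
  rw [show sinh / cosh = tanh from funext fun y => (tanh_eq_sinh_div_cosh y).symm] at h
  refine h.congr_deriv ?_
  rw [tanh_eq_sinh_div_cosh]
  field_simp

theorem monotone_tanh : Monotone tanh :=
  monotone_of_hasDerivAt_nonneg hasDerivAt_tanh fun x => sub_nonneg.2 (tanh_sq_lt_one x).le

theorem lipschitzWith_tanh : LipschitzWith 1 tanh :=
  lipschitzWith_of_nnnorm_deriv_le (fun x => (hasDerivAt_tanh x).differentiableAt) fun x => by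
    rw [(hasDerivAt_tanh x).deriv, ← NNReal.coe_le_coe, coe_nnnorm, Real.norm_eq_abs,
      NNReal.coe_one, abs_of_pos (sub_pos.2 (tanh_sq_lt_one x))]
    linarith [sq_nonneg (tanh x)]

theorem abs_tanh_sub_tanh_le (x y : ℝ) : |tanh x - tanh y| ≤ |x - y| := by
  simpa [edist_dist] using! lipschitzWith_tanh x y

theorem abs_tanh_le_abs (x : ℝ) : |tanh x| ≤ |x| := by
  simpa using abs_tanh_sub_tanh_le x 0

theorem mul_tanh_le_sq (x : ℝ) : x * tanh x ≤ x ^ 2 :=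
  calc x * tanh x ≤ |x| * |tanh x| := (le_abs_self _).trans (abs_mul x (tanh x)).le
    _ ≤ |x| * |x| := mul_le_mul_of_nonneg_left (abs_tanh_le_abs x) (abs_nonneg x)
    _ = x ^ 2 := by rw [← sq, sq_abs]

theorem sq_sub_pow_four_div_three_le_mul_tanh (x : ℝ) : x ^ 2 - x ^ 4 / 3 ≤ x * tanh x := by
  have hmono : Monotone fun y => tanh y - y + y ^ 3 / 3 := by
    refine monotone_of_hasDerivAt_nonneg (f' := fun y => y ^ 2 - tanh y ^ 2) (fun y => ?_)
      fun y => sub_nonneg.2 (sq_le_sq.2 (abs_tanh_le_abs y))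
    refine (((hasDerivAt_tanh y).fun_sub (hasDerivAt_id' y)).fun_add
      (((hasDerivAt_id' y).fun_pow 3).div_const 3)).congr_deriv ?_
    push_cast
    ring
  have := hmono.mul_apply_nonneg (by simp) x
  linarith

theorem tanh_add (x y : ℝ) : tanh (x + y) = (tanh x + tanh y) / (1 + tanh x * tanh y) := by
  have hx := (cosh_pos x).ne'
  have hy := (cosh_pos y).ne'
  rw [tanh_eq_sinh_div_cosh, tanh_eq_sinh_div_cosh, tanh_eq_sinh_div_cosh, sinh_add, cosh_add]
  field_simp

theorem tanh_sub (x y : ℝ) : tanh (x - y) = (tanh x - tanh y) / (1 - tanh x * tanh y) := by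
  simpa [sub_eq_add_neg] using tanh_add x (-y)

theorem abs_tanh_mul_tanh_lt_one (x y : ℝ) : |tanh x * tanh y| < 1 := by
  rw [abs_mul]
  exact mul_lt_one_of_nonneg_of_lt_one_left (abs_nonneg _) (abs_tanh_lt_one x) (abs_tanh_lt_one y).le

theorem tanh_add_add_tanh_sub (x y : ℝ) :
    tanh (x + y) + tanh (x - y) =
      2 * tanh x * (1 - tanh y ^ 2) / (1 - tanh x ^ 2 * tanh y ^ 2) := by
  obtain ⟨hp, hm⟩ := abs_lt.1 (abs_tanh_mul_tanh_lt_one x y)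
  rw [tanh_add, tanh_sub, div_add_div _ _ (by linarith) (by linarith)]
  congr 1 <;> ring

end Real

open Real

/-- **Lemma (tanh inequalities).** For any `a b : ℝ`,
`(1/2)(tanh(a+b) − tanh(a−b)) ≤ |b|` and
`(a/2)(tanh(a+b) + tanh(a−b)) ≥ a² − a⁴/3 − a²b²`. -/
theorem tanh_half_diff_le_abs_and_half_sum_ge (a b : ℝ) :
    (1 / 2) * (Real.tanh (a + b) - Real.tanh (a - b)) ≤ |b| ∧
    (a / 2) * (Real.tanh (a + b) + Real.tanh (a - b)) ≥ a ^ 2 - a ^ 4 / 3 - a ^ 2 * b ^ 2 := by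
  constructor
  · calc (1 / 2) * (tanh (a + b) - tanh (a - b))
        ≤ (1 / 2) * |(a + b) - (a - b)| := by
          gcongr; exact (le_abs_self _).trans (abs_tanh_sub_tanh_le _ _)
      _ = |b| := by rw [add_sub_sub_cancel, ← two_mul, abs_mul, abs_two]; ring
  · rw [tanh_add_add_tanh_sub, ge_iff_le]
    set t := tanh a
    set s := tanh b
    have hs_sq : s ^ 2 ≤ b ^ 2 := sq_le_sq.2 (abs_tanh_le_abs b)
    have hat_nonneg : 0 ≤ a * t := monotone_tanh.mul_apply_nonneg tanh_zero a
    have hats : a * t * s ^ 2 ≤ a ^ 2 * b ^ 2 :=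
      mul_le_mul (mul_tanh_le_sq a) hs_sq (sq_nonneg s) (sq_nonneg a)
    have hden : 0 < 1 - t ^ 2 * s ^ 2 := by
      rw [← mul_pow, sub_pos, sq_lt_one_iff_abs_lt_one]
      exact abs_tanh_mul_tanh_lt_one a b
    calc a ^ 2 - a ^ 4 / 3 - a ^ 2 * b ^ 2
        ≤ a * t * (1 - s ^ 2) := by linarith [sq_sub_pow_four_div_three_le_mul_tanh a]
      _ ≤ a * t * (1 - s ^ 2) / (1 - t ^ 2 * s ^ 2) :=
          le_div_self (mul_nonneg hat_nonneg (sub_nonneg.2 (tanh_sq_lt_one b).le)) hden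
            (sub_le_self 1 (by positivity))
      _ = a / 2 * (2 * t * (1 - s ^ 2) / (1 - t ^ 2 * s ^ 2)) := by ring
end
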